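/- Let m ≥ 1, k, l ∈ ℕ, let P : ℝ^m → ℝ_{0,m} be a right monogenic function (P ∂_x = 0) that is homogeneous of degree k and satisfies Σ_{j=1}^m e_j P(x) e_j = (−1)^l (2l − m) P(x) for all x, and let D : (0,∞) → ℝ be continuously differentiable. Then for all x ≠ 0, writing r = |x|, the right Dirac derivative satisfies (D(r) ι(x) P(x) ι(x))∂_x = −((2k+m+2)D(r) + r D′(r)) ι(x) P(x) + (−1)^{l+1}(2l−m) D(r) P(x) ι(x). -/

import Mathlib

noncomputable section

open scoped BigOperators

/-- The `ℓ¹`-norm with respect to a Hamel basis.  On a finite-dimensional real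
vector space (such as the Clifford algebra `ℝ_{0,m}`) the induced topology is
the canonical one. -/
def hamelNorm (V : Type) [AddCommGroup V] [Module ℝ V] : AddGroupNorm V where
  toFun v := ∑ i ∈ ((Module.Basis.ofVectorSpace ℝ V).repr v).support,
      |(Module.Basis.ofVectorSpace ℝ V).repr v i|
  map_zero' := by simp
  add_le' := by
    intro x y
    classical
    set b := Module.Basis.ofVectorSpace ℝ V
    have hrepr : b.repr (x + y) = b.repr x + b.repr y := map_add _ _ _
    calc ∑ i ∈ (b.repr (x + y)).support, |b.repr (x + y) i|
        ≤ ∑ i ∈ (b.repr x).support ∪ (b.repr y).support, |b.repr (x + y) i| := by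
          refine Finset.sum_le_sum_of_subset_of_nonneg ?_ (fun i _ _ => abs_nonneg _)
          rw [hrepr]; exact Finsupp.support_add
      _ ≤ ∑ i ∈ (b.repr x).support ∪ (b.repr y).support, (|b.repr x i| + |b.repr y i|) := by
          refine Finset.sum_le_sum fun i _ => ?_
          rw [hrepr, Finsupp.add_apply]; exact abs_add_le _ _
      _ = (∑ i ∈ (b.repr x).support ∪ (b.repr y).support, |b.repr x i|)
            + ∑ i ∈ (b.repr x).support ∪ (b.repr y).support, |b.repr y i| :=
          Finset.sum_add_distrib
      _ = (∑ i ∈ (b.repr x).support, |b.repr x i|)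
            + ∑ i ∈ (b.repr y).support, |b.repr y i| := by
          rw [← Finset.sum_subset Finset.subset_union_left
              (fun i _ hi => by simp [Finsupp.notMem_support_iff.mp hi]),
            ← Finset.sum_subset Finset.subset_union_right
              (fun i _ hi => by simp [Finsupp.notMem_support_iff.mp hi])]
  neg' := by
    intro x
    simp [map_neg]
  eq_zero_of_map_eq_zero' := by
    classical
    intro x hx
    set b := Module.Basis.ofVectorSpace ℝ V
    have h0 : b.repr x = 0 := by
      ext i
      by_cases hi : i ∈ (b.repr x).support
      · exact abs_eq_zero.mp
          ((Finset.sum_eq_zero_iff_of_nonneg (fun i _ => abs_nonneg _)).mp hx i hi)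
      · simpa using Finsupp.notMem_support_iff.mp hi
    exact b.repr.map_eq_zero_iff.mp h0

/-- The quadratic form `Q(v) = -‖v‖²` on `ℝ^m`. -/
def Qneg (m : ℕ) : QuadraticForm ℝ (EuclideanSpace ℝ (Fin m)) :=
  (QuadraticMap.weightedSumSquares ℝ fun _ : Fin m => (-1 : ℝ)).comp
    (WithLp.linearEquiv 2 ℝ (Fin m → ℝ)).toLinearMap

/-- The real Clifford algebra `ℝ_{0,m}`. -/
abbrev Cl (m : ℕ) := CliffordAlgebra (Qneg m)

/-- The canonical embedding `ι : ℝ^m → ℝ_{0,m}`. -/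
abbrev ιC (m : ℕ) : EuclideanSpace ℝ (Fin m) →ₗ[ℝ] Cl m := CliffordAlgebra.ι (Qneg m)

/-- The generators `e₁, …, e_m` of `ℝ_{0,m}`. -/
def eC (m : ℕ) (j : Fin m) : Cl m := ιC m (EuclideanSpace.single j 1)

noncomputable instance (m : ℕ) : NormedAddCommGroup (Cl m) :=
  (hamelNorm (Cl m)).toNormedAddCommGroup

noncomputable instance (m : ℕ) : NormedSpace ℝ (Cl m) where
  norm_smul_le a v := by
    classical
    have hv : ‖v‖ = ∑ i ∈ ((Module.Basis.ofVectorSpace ℝ (Cl m)).repr v).support,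
        |(Module.Basis.ofVectorSpace ℝ (Cl m)).repr v i| := rfl
    have hav : ‖a • v‖ = ∑ i ∈ ((Module.Basis.ofVectorSpace ℝ (Cl m)).repr (a • v)).support,
        |(Module.Basis.ofVectorSpace ℝ (Cl m)).repr (a • v) i| := rfl
    set b := Module.Basis.ofVectorSpace ℝ (Cl m)
    have hrepr : b.repr (a • v) = a • b.repr v := map_smul _ _ _
    rw [hav, hv, Real.norm_eq_abs]
    calc ∑ i ∈ (b.repr (a • v)).support, |b.repr (a • v) i|
        ≤ ∑ i ∈ (b.repr v).support, |b.repr (a • v) i| := by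
          refine Finset.sum_le_sum_of_subset_of_nonneg ?_ (fun i _ _ => abs_nonneg _)
          rw [hrepr]; exact Finsupp.support_smul
      _ = ∑ i ∈ (b.repr v).support, |a| * |b.repr v i| := by
          refine Finset.sum_congr rfl fun i _ => ?_
          rw [hrepr, Finsupp.smul_apply, smul_eq_mul, abs_mul]
      _ = |a| * ∑ i ∈ (b.repr v).support, |b.repr v i| := by rw [Finset.mul_sum]

/-- The Dirac operator acting from the left: `∂_x f = Σⱼ eⱼ (∂_{xⱼ} f)`. -/
def diracL (m : ℕ) (f : EuclideanSpace ℝ (Fin m) → Cl m) (x : EuclideanSpace ℝ (Fin m)) : Cl m :=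
  ∑ j, eC m j * fderiv ℝ f x (EuclideanSpace.single j 1)

/-- The Dirac operator acting from the right: `f ∂_x = Σⱼ (∂_{xⱼ} f) eⱼ`. -/
def diracR (m : ℕ) (f : EuclideanSpace ℝ (Fin m) → Cl m) (x : EuclideanSpace ℝ (Fin m)) : Cl m :=
  ∑ j, fderiv ℝ f x (EuclideanSpace.single j 1) * eC m j

/-!
By the product rule, `∂_{xⱼ}(D(r) x P x)` has four terms, and the sums `Σⱼ (·) eⱼ` are evaluated
with the anticommutation relation `x eⱼ = -2 xⱼ - eⱼ x`. Differentiating the left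
factor `x` gives `-2 x P - (Σⱼ eⱼ P eⱼ) x`, where the `l`-vector eigenvalue enters; differentiating
`P` gives `-2 x (x·∇)P - x (P ∂_x) x = -2k x P` by Euler's identity and monogenicity;
differentiating the right factor `x` gives `-m x P` since `eⱼ² = -1`; and the radial factor
contributes `D'(r)/r · x P x x = -r D'(r) x P`.
-/

open scoped RealInnerProductSpace

instance ExteriorAlgebra.instModuleFinite {K M : Type*} [Field K] [AddCommGroup M] [Module K M]
    [FiniteDimensional K M] : Module.Finite K (ExteriorAlgebra K M) := by
  classical
  have hvanish : ∀ n, Module.finrank K M < n → ⋀[K]^n M = ⊥ := fun n hn =>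
    Submodule.finrank_eq_zero.mp <| by rw [exteriorPower.finrank_eq, Nat.choose_eq_zero_of_lt hn]
  have htop : ⨆ n : Fin (Module.finrank K M + 1), ⋀[K]^n M = ⊤ := by
    rw [eq_top_iff, ← (ExteriorAlgebra.gradedAlgebra K M).isInternal.submodule_iSup_eq_top]
    refine iSup_le fun n => ?_
    rcases le_or_gt n (Module.finrank K M) with hn | hn
    · exact le_iSup_of_le ⟨n, Nat.lt_succ_of_le hn⟩ le_rfl
    · simp [hvanish n hn]
  exact ⟨htop ▸ Submodule.fg_iSup _ fun _ => Module.Finite.iff_fg.mp inferInstance⟩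

instance CliffordAlgebra.instModuleFinite {K M : Type*} [Field K] [Invertible (2 : K)]
    [AddCommGroup M] [Module K M] [FiniteDimensional K M] (Q : QuadraticForm K M) :
    Module.Finite K (CliffordAlgebra Q) :=
  .equiv (CliffordAlgebra.equivExterior Q).symm

theorem hasFDerivAt_norm {E : Type*} [NormedAddCommGroup E] [InnerProductSpace ℝ E] {x : E}
    (hx : x ≠ 0) : HasFDerivAt (‖·‖) (‖x‖⁻¹ • innerSL ℝ x) x := by
  have h := (hasStrictFDerivAt_norm_sq x).hasFDerivAt.sqrt (by positivity)
  simp only [Real.sqrt_sq (norm_nonneg _)] at h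
  convert h using 1
  ext v
  have : ‖x‖ ≠ 0 := norm_ne_zero_iff.mpr hx
  simp only [smul_apply, coe_innerSL_apply, smul_eq_mul, one_div, mul_inv_rev, nsmul_eq_mul,
    Nat.cast_ofNat]
  field_simp

theorem HasFDerivAt.apply_self_eq_smul_of_homogeneous {E F : Type*} [NormedAddCommGroup E]
    [NormedSpace ℝ E] [NormedAddCommGroup F] [NormedSpace ℝ F] {f : E → F} {f' : E →L[ℝ] F}
    {x : E} {k : ℕ} (hf : HasFDerivAt f f' x) (hhom : ∀ t : ℝ, f (t • x) = t ^ k • f x) :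
    f' x = (k : ℝ) • f x := by
  have hray : HasDerivAt (fun t : ℝ => t • x) x 1 := by
    simpa using (hasDerivAt_id (1 : ℝ)).smul_const x
  have h1 : HasDerivAt (fun t : ℝ => f (t • x)) (f' x) 1 :=
    (one_smul ℝ x ▸ hf).comp_hasDerivAt 1 hray
  have h2 : HasDerivAt (fun t : ℝ => f (t • x)) ((k : ℝ) • f x) 1 := by
    simp only [hhom]
    simpa using (hasDerivAt_pow k (1 : ℝ)).smul_const (f x)
  exact h1.unique h2

section Clifford

variable {m : ℕ}

theorem Qneg_apply (v : EuclideanSpace ℝ (Fin m)) : Qneg m v = -‖v‖ ^ 2 := by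
  rw [EuclideanSpace.real_norm_sq_eq]
  simp [Qneg, QuadraticMap.weightedSumSquares_apply, sq]

theorem polar_Qneg (u v : EuclideanSpace ℝ (Fin m)) :
    QuadraticMap.polar (Qneg m) u v = -(2 * ⟪u, v⟫) := by
  simp only [QuadraticMap.polar, Qneg_apply, norm_add_sq_real]
  ring

theorem ιC_mul_self (x : EuclideanSpace ℝ (Fin m)) :
    ιC m x * ιC m x = (-‖x‖ ^ 2) • (1 : Cl m) := by
  rw [CliffordAlgebra.ι_sq_scalar, Qneg_apply, Algebra.algebraMap_eq_smul_one]

theorem ιC_mul_ιC_add_swap (u v : EuclideanSpace ℝ (Fin m)) :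
    ιC m u * ιC m v + ιC m v * ιC m u = (-(2 * ⟪u, v⟫)) • (1 : Cl m) := by
  rw [CliffordAlgebra.ι_mul_ι_add_swap, polar_Qneg, Algebra.algebraMap_eq_smul_one]

@[simp]
theorem ιC_single (j : Fin m) : ιC m (EuclideanSpace.single j 1) = eC m j := rfl

theorem eC_mul_self (j : Fin m) : eC m j * eC m j = -1 := by
  rw [← ιC_single, ιC_mul_self]
  simp

theorem ιC_mul_eC (x : EuclideanSpace ℝ (Fin m)) (j : Fin m) :
    ιC m x * eC m j = (-(2 * x j)) • (1 : Cl m) - eC m j * ιC m x := by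
  have h := ιC_mul_ιC_add_swap x (EuclideanSpace.single j 1)
  simp only [ιC_single, EuclideanSpace.inner_single_right, one_mul, conj_trivial] at h
  rw [← h, add_sub_cancel_right]

theorem sum_smul_apply_single {M : Type*} [AddCommGroup M] [Module ℝ M]
    (L : EuclideanSpace ℝ (Fin m) →ₗ[ℝ] M) (x : EuclideanSpace ℝ (Fin m)) :
    ∑ j, x j • L (EuclideanSpace.single j 1) = L x := by
  conv_rhs => rw [← (EuclideanSpace.basisFun (Fin m) ℝ).sum_repr x]
  simp [map_sum, map_smul]

theorem sum_smul_mul_eC (a : Cl m) (x : EuclideanSpace ℝ (Fin m)) :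
    ∑ j, x j • (a * eC m j) = a * ιC m x := by
  simp_rw [← mul_smul_comm, ← Finset.mul_sum, ← ιC_single, sum_smul_apply_single]

theorem sum_mul_eC_mul_eC (a : Cl m) : ∑ j, a * eC m j * eC m j = (-(m : ℝ)) • a := by
  simp [mul_assoc, eC_mul_self, ← Nat.cast_smul_eq_nsmul ℝ]

theorem sum_mul_ιC_mul_eC (L : EuclideanSpace ℝ (Fin m) →ₗ[ℝ] Cl m)
    (x : EuclideanSpace ℝ (Fin m)) :
    ∑ j, L (EuclideanSpace.single j 1) * ιC m x * eC m j
      = (-2 : ℝ) • L x - (∑ j, L (EuclideanSpace.single j 1) * eC m j) * ιC m x := by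
  simp_rw [mul_assoc, ιC_mul_eC, mul_sub, mul_smul_comm, mul_one, Finset.sum_sub_distrib]
  rw [← sum_smul_apply_single L x, Finset.smul_sum, Finset.sum_mul]
  simp_rw [smul_smul, mul_assoc, ← neg_mul]

theorem HasFDerivAt.clifford_mul {E : Type*} [NormedAddCommGroup E] [NormedSpace ℝ E]
    {f g : E → Cl m} {f' g' : E →L[ℝ] Cl m} {x : E}
    (hf : HasFDerivAt f f' x) (hg : HasFDerivAt g g' x) :
    HasFDerivAt (fun y => f y * g y)
      ((LinearMap.mulLeft ℝ (f x)).toContinuousLinearMap ∘L g'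
        + (LinearMap.mulRight ℝ (g x)).toContinuousLinearMap ∘L f') x := by
  refine ((LinearMap.mul ℝ (Cl m)).toContinuousBilinearMap.hasFDerivAt_of_bilinear hf hg
    ).congr_fderiv ?_
  ext v
  simp

theorem fderiv_smul_ιC_mul_mul_ιC_apply {φ : EuclideanSpace ℝ (Fin m) → ℝ}
    {P : EuclideanSpace ℝ (Fin m) → Cl m} {x : EuclideanSpace ℝ (Fin m)}
    (hφ : DifferentiableAt ℝ φ x) (hP : DifferentiableAt ℝ P x) (v : EuclideanSpace ℝ (Fin m)) :
    fderiv ℝ (fun y => φ y • (ιC m y * P y * ιC m y)) x v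
      = φ x • (ιC m v * P x * ιC m x + ιC m x * fderiv ℝ P x v * ιC m x + ιC m x * P x * ιC m v)
        + fderiv ℝ φ x v • (ιC m x * P x * ιC m x) := by
  have hι : HasFDerivAt (ιC m) (ιC m).toContinuousLinearMap x :=
    (ιC m).toContinuousLinearMap.hasFDerivAt
  have hF : HasFDerivAt (fun y => φ y • (ιC m y * P y * ιC m y)) _ x :=
    hφ.hasFDerivAt.smul ((hι.clifford_mul hP.hasFDerivAt).clifford_mul hι)
  rw [hF.fderiv]
  simp only [add_apply, smul_apply, ContinuousLinearMap.comp_apply, ContinuousLinearMap.smulRight_apply,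
    LinearMap.coe_toContinuousLinearMap', LinearMap.mulLeft_apply, LinearMap.mulRight_apply,
    smul_add, add_mul, mul_assoc]
  abel

theorem sum_fderiv_radial_smul_mul_ιC_mul_eC {D : ℝ → ℝ} {d : ℝ} {x : EuclideanSpace ℝ (Fin m)}
    (hx : x ≠ 0) (hD : HasDerivAt D d ‖x‖) (a : Cl m) :
    ∑ j, fderiv ℝ (fun y => D ‖y‖) x (EuclideanSpace.single j 1) • (a * ιC m x * eC m j)
      = (-(‖x‖ * d)) • a := by
  have hradial : HasFDerivAt (fun y => D ‖y‖) _ x := hD.comp_hasFDerivAt x (hasFDerivAt_norm hx)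
  have hr : ‖x‖ ≠ 0 := norm_ne_zero_iff.mpr hx
  simp only [hradial.fderiv, smul_apply, innerSL_apply_apply, EuclideanSpace.inner_single_right,
    conj_trivial, one_mul, smul_eq_mul, mul_smul, ← Finset.smul_sum, sum_smul_mul_eC]
  rw [mul_assoc, ιC_mul_self, mul_smul_comm, mul_one, smul_smul, smul_smul]
  congr 1
  field_simp

end Clifford

theorem diracR_D_smul_xPx_general (m k l : ℕ) (P : EuclideanSpace ℝ (Fin m) → Cl m)
    (hP : ContDiff ℝ 1 P) (hPmono : ∀ x, diracR m P x = 0)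
    (hPhom : ∀ (t : ℝ) (x : EuclideanSpace ℝ (Fin m)), P (t • x) = t ^ k • P x)
    (hPl : ∀ x, ∑ j, eC m j * P x * eC m j
      = ((-1 : ℝ) ^ l * (2 * (l : ℝ) - (m : ℝ))) • P x)
    (D : ℝ → ℝ) (hD : ContDiffOn ℝ 1 D (Set.Ioi 0))
    (x : EuclideanSpace ℝ (Fin m)) (hx : x ≠ 0) :
    diracR m (fun y => D ‖y‖ • (ιC m y * P y * ιC m y)) x
      = (-((2 * (k : ℝ) + (m : ℝ) + 2) * D ‖x‖ + ‖x‖ * deriv D ‖x‖)) • (ιC m x * P x)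
        + ((-1 : ℝ) ^ (l + 1) * (2 * (l : ℝ) - (m : ℝ)) * D ‖x‖) • (P x * ιC m x) := by
  have hPx : DifferentiableAt ℝ P x := hP.differentiable one_ne_zero x
  have hDx : HasDerivAt D (deriv D ‖x‖) ‖x‖ :=
    ((hD.differentiableOn one_ne_zero).differentiableAt
      (Ioi_mem_nhds (norm_pos_iff.mpr hx))).hasDerivAt
  have hEuler := hPx.hasFDerivAt.apply_self_eq_smul_of_homogeneous (hPhom · x)
  have hleft := sum_mul_ιC_mul_eC (LinearMap.mulRight ℝ (P x) ∘ₗ ιC m) x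
  have hmiddle := sum_mul_ιC_mul_eC (LinearMap.mulLeft ℝ (ιC m x) ∘ₗ (fderiv ℝ P x).toLinearMap) x
  simp only [LinearMap.comp_apply, LinearMap.mulRight_apply, LinearMap.mulLeft_apply, ιC_single,
    ContinuousLinearMap.coe_coe] at hleft hmiddle
  have hmono : ∑ j, ιC m x * fderiv ℝ P x (EuclideanSpace.single j 1) * eC m j = 0 := by
    simp_rw [mul_assoc, ← Finset.mul_sum]
    rw [← diracR, hPmono, mul_zero]
  have hradial : DifferentiableAt ℝ (fun y => D ‖y‖) x :=
    hDx.differentiableAt.comp x (hasFDerivAt_norm hx).differentiableAt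
  simp only [diracR, fderiv_smul_ιC_mul_mul_ιC_apply hradial hPx, ιC_single, add_mul,
    smul_mul_assoc, Finset.sum_add_distrib, ← Finset.smul_sum]
  rw [hleft, hmiddle, hmono, hEuler, hPl, sum_mul_eC_mul_eC,
    sum_fderiv_radial_smul_mul_ιC_mul_eC hx hDx, pow_succ]
  simp only [smul_mul_assoc, mul_smul_comm, zero_mul, sub_zero]
  module

/-- `(D(r) ι(x) P(x) ι(x))∂_x = -((2k+m+2)D(r) + r D′(r)) ι(x) P(x)
+ (-1)^{l+1}(2l-m) D(r) P(x) ι(x)`. -/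
theorem diracR_D_smul_xPx (m k l : ℕ) (hm : 1 ≤ m) (P : EuclideanSpace ℝ (Fin m) → Cl m)
    (hP : ContDiff ℝ 1 P) (hPmono : ∀ x, diracR m P x = 0)
    (hPhom : ∀ (t : ℝ) (x : EuclideanSpace ℝ (Fin m)), P (t • x) = t ^ k • P x)
    (hPl : ∀ x, ∑ j, eC m j * P x * eC m j
      = ((-1 : ℝ) ^ l * (2 * (l : ℝ) - (m : ℝ))) • P x)
    (D : ℝ → ℝ) (hD : ContDiffOn ℝ 1 D (Set.Ioi 0))
    (x : EuclideanSpace ℝ (Fin m)) (hx : x ≠ 0) :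
    diracR m (fun y => D ‖y‖ • (ιC m y * P y * ιC m y)) x
      = (-((2 * (k : ℝ) + (m : ℝ) + 2) * D ‖x‖ + ‖x‖ * deriv D ‖x‖)) • (ιC m x * P x)
        + ((-1 : ℝ) ^ (l + 1) * (2 * (l : ℝ) - (m : ℝ)) * D ‖x‖) • (P x * ιC m x) :=
  diracR_D_smul_xPx_general m k l P hP hPmono hPhom hPl D hD x hx

end
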